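/- Let G be a finite graph whose vertex set is partitioned into cliques {U_p}_{p∈P}, and let W ⊆ V(G) be such that no vertex of U_p \ W is adjacent to any vertex outside U_p, and |U_p \ W| is even for every p. Then the matching number of G equals the matching number of G[W] plus the sum over p of |U_p \ W| / 2. -/

import Mathlib

/-!
Write `ν(S)` for the largest size of a matching of `G` with all vertices in `S`, so that
`ν(V) = ν(G)` and `ν(W) = ν(G[W])`. If `u ≠ v` lie outside `S` in the same cluster `U_p`, and
their neighbours all lie in the clique `U_p`, then `ν(S ∪ {u, v}) = ν(S) + 1`: the edge `uv`
extends a matching inside `S`, and conversely a matching that pairs `u` with `x` and `v` with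
`y ≠ x` can trade the edges `ux`, `vy` for `xy`, an edge because `x, y ∈ U_p`. Since every
`|U_p \ W|` is even, `V \ W` can be added to `W` two vertices of one cluster at a time.
-/

/-- The maximum size of a matching in a graph. -/
noncomputable def matchingNumber {V : Type*} (G : SimpleGraph V) : ℕ :=
  sSup {n | ∃ M : G.Subgraph, M.IsMatching ∧ M.edgeSet.ncard = n}

namespace SimpleGraph

variable {V V' : Type*} {G : SimpleGraph V} {G' : SimpleGraph V'}

noncomputable def matchingNumberOn (G : SimpleGraph V) (S : Set V) : ℕ :=
  sSup {n | ∃ M : G.Subgraph, M.IsMatching ∧ M.verts ⊆ S ∧ M.edgeSet.ncard = n}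

namespace Subgraph

variable {M : G.Subgraph} {a b u v x y : V}

lemma IsMatching.of_map {f : G' →g G} (hf : Function.Injective f) {M : G'.Subgraph}
    (h : (M.map f).IsMatching) : M.IsMatching := by
  intro v hv
  obtain ⟨_, ⟨a, b, hab, ha, rfl⟩, huniq⟩ := h ⟨v, hv, rfl⟩
  obtain rfl := hf ha
  exact ⟨b, hab, fun y hy ↦ hf (huniq _ ⟨a, y, hy, rfl, rfl⟩)⟩

lemma map_comap_eq_of_verts_subset (f : G' ↪g G) (hM : M.verts ⊆ Set.range f) :
    (M.comap f.toHom).map f.toHom = M := by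
  ext x y
  · rw [map_verts, comap_verts, RelEmbedding.coe_toRelHom, Set.image_preimage_eq_of_subset hM]
  · constructor
    · rintro ⟨a, b, ⟨-, hab⟩, rfl, rfl⟩
      exact hab
    · intro hxy
      obtain ⟨a, rfl⟩ := hM (M.edge_vert hxy)
      obtain ⟨b, rfl⟩ := hM (M.edge_vert hxy.symm)
      exact ⟨a, b, ⟨f.map_adj_iff.mp (M.adj_sub hxy), hxy⟩, rfl, rfl⟩

lemma IsMatching.deleteVerts_pair (hM : M.IsMatching) (hab : M.Adj a b) :
    (M.deleteVerts {a, b}).IsMatching := by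
  rintro v ⟨hv, hvab⟩
  obtain ⟨w, hw, huniq⟩ := hM hv
  have hwab : w ∉ ({a, b} : Set V) := by
    rintro (rfl | rfl)
    · exact hvab (.inr (hM.eq_of_adj_right hw hab.symm))
    · exact hvab (.inl (hM.eq_of_adj_right hw hab))
  exact ⟨w, deleteVerts_adj.mpr ⟨hv, hvab, M.edge_vert hw.symm, hwab, hw⟩,
    fun y hy ↦ huniq y (deleteVerts_adj.mp hy).2.2.2.2⟩

lemma IsMatching.edgeSet_deleteVerts_pair (hM : M.IsMatching) (hab : M.Adj a b) :
    (M.deleteVerts {a, b}).edgeSet = M.edgeSet \ {s(a, b)} := by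
  ext e
  induction e using Sym2.ind with
  | _ c d =>
    have hca : M.Adj c d → (c = a ↔ d = b) := fun h ↦
      ⟨fun hc ↦ hM.eq_of_adj_left (hc ▸ h) hab, fun hd ↦ hM.eq_of_adj_right (hd ▸ h) hab⟩
    have hcb : M.Adj c d → (c = b ↔ d = a) := fun h ↦
      ⟨fun hc ↦ hM.eq_of_adj_left (hc ▸ h) hab.symm,
        fun hd ↦ hM.eq_of_adj_right (hd ▸ h) hab.symm⟩
    simp only [Subgraph.mem_edgeSet, deleteVerts_adj, Set.mem_sdiff, Set.mem_singleton_iff,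
      Sym2.eq_iff, Set.mem_insert_iff]
    have hcd : M.Adj c d → c ∈ M.verts ∧ d ∈ M.verts :=
      fun h ↦ ⟨M.edge_vert h, M.edge_vert h.symm⟩
    tauto

lemma IsMatching.ncard_edgeSet_deleteVerts_pair [Finite V] (hM : M.IsMatching)
    (hab : M.Adj a b) :
    (M.deleteVerts {a, b}).edgeSet.ncard + 1 = M.edgeSet.ncard := by
  rw [hM.edgeSet_deleteVerts_pair hab]
  exact Set.ncard_sdiff_singleton_add_one hab (Set.toFinite _)

lemma IsMatching.sup_subgraphOfAdj (hM : M.IsMatching) (ha : a ∉ M.verts) (hb : b ∉ M.verts)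
    (hab : G.Adj a b) : (M ⊔ G.subgraphOfAdj hab).IsMatching := by
  refine hM.sup (.subgraphOfAdj hab) ?_
  rw [hM.support_eq_verts, (IsMatching.subgraphOfAdj hab).support_eq_verts, subgraphOfAdj_verts]
  simp [Set.disjoint_insert_right, ha, hb]

lemma ncard_edgeSet_sup_subgraphOfAdj [Finite V] (ha : a ∉ M.verts) (hab : G.Adj a b) :
    (M ⊔ G.subgraphOfAdj hab).edgeSet.ncard = M.edgeSet.ncard + 1 := by
  rw [edgeSet_sup, edgeSet_subgraphOfAdj, Set.union_singleton,
    Set.ncard_insert_of_notMem (fun h ↦ ha (M.edge_vert (Subgraph.mem_edgeSet.mp h)))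
      (Set.toFinite _)]

lemma IsMatching.exists_rematch [Finite V] (hM : M.IsMatching) (hux : M.Adj u x)
    (hvy : M.Adj v y) (hxv : x ≠ v) (hxy : G.Adj x y) :
    ∃ M' : G.Subgraph, M'.IsMatching ∧ M'.verts ⊆ M.verts \ {u, v} ∧
      M'.edgeSet.ncard + 1 = M.edgeSet.ncard := by
  have hyu : y ≠ u := by
    rintro rfl
    exact hxv (hM.eq_of_adj_left hux hvy.symm)
  have hvu : v ≠ u := fun h ↦ hxy.ne (hM.eq_of_adj_left hux (h ▸ hvy))
  have hvy' : (M.deleteVerts {u, x}).Adj v y := deleteVerts_adj.mpr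
    ⟨M.edge_vert hvy, by simp [hvu, hxv.symm], M.edge_vert hvy.symm, by simp [hyu, hxy.ne.symm],
      hvy⟩
  have hM₁ := hM.deleteVerts_pair hux
  have hM₂ := hM₁.deleteVerts_pair hvy'
  have hx : x ∉ ((M.deleteVerts {u, x}).deleteVerts {v, y}).verts := by simp
  have hy : y ∉ ((M.deleteVerts {u, x}).deleteVerts {v, y}).verts := by simp
  refine ⟨_ ⊔ G.subgraphOfAdj hxy, hM₂.sup_subgraphOfAdj hx hy hxy, ?_, ?_⟩
  · have := M.edge_vert hux.symm
    have := M.edge_vert hvy.symm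
    have := (M.adj_sub hux).ne
    have := (M.adj_sub hvy).ne
    intro z
    simp only [verts_sup, subgraphOfAdj_verts, deleteVerts_verts]
    grind
  · rw [ncard_edgeSet_sup_subgraphOfAdj hx, hM₁.ncard_edgeSet_deleteVerts_pair hvy',
      hM.ncard_edgeSet_deleteVerts_pair hux]

end Subgraph


lemma matchingNumber_eq_matchingNumberOn_range (f : G' ↪g G) :
    matchingNumber G' = G.matchingNumberOn (Set.range f) := by
  have ncard_map (M' : G'.Subgraph) : (M'.map f.toHom).edgeSet.ncard = M'.edgeSet.ncard := by
    rw [Subgraph.edgeSet_map]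
    exact Set.ncard_image_of_injective _ (Sym2.map.injective f.injective)
  refine congrArg sSup (Set.ext fun n ↦ ⟨?_, ?_⟩)
  · rintro ⟨M', hM', rfl⟩
    refine ⟨M'.map f.toHom, hM'.map _ f.injective, ?_, ncard_map M'⟩
    simp
  · rintro ⟨M, hM, hMf, rfl⟩
    have hmap := Subgraph.map_comap_eq_of_verts_subset f hMf
    refine ⟨M.comap f.toHom, .of_map f.injective (hmap ▸ hM), ?_⟩
    rw [← ncard_map, hmap]

lemma matchingNumberOn_univ : G.matchingNumberOn Set.univ = matchingNumber G := by
  rw [matchingNumber_eq_matchingNumberOn_range (Embedding.refl (G := G))]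
  exact congrArg _ (Set.range_eq_univ.mpr fun v ↦ ⟨v, rfl⟩).symm

lemma matchingNumber_induce (W : Set V) :
    matchingNumber (G.induce W) = G.matchingNumberOn W := by
  rw [matchingNumber_eq_matchingNumberOn_range (Embedding.induce W)]
  exact congrArg _ Subtype.range_coe

section Finite

variable [Finite V] {S : Set V} {u v : V}

lemma bddAbove_matchingNumberOn_set (S : Set V) :
    BddAbove {n | ∃ M : G.Subgraph, M.IsMatching ∧ M.verts ⊆ S ∧ M.edgeSet.ncard = n} := by
  refine ⟨G.edgeSet.ncard, ?_⟩
  rintro n ⟨M, -, -, rfl⟩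
  exact Set.ncard_le_ncard M.edgeSet_subset

lemma le_matchingNumberOn {M : G.Subgraph} (hM : M.IsMatching) (hS : M.verts ⊆ S) :
    M.edgeSet.ncard ≤ G.matchingNumberOn S :=
  le_csSup (bddAbove_matchingNumberOn_set S) ⟨M, hM, hS, rfl⟩

lemma exists_isMatching_ncard_eq_matchingNumberOn (G : SimpleGraph V) (S : Set V) :
    ∃ M : G.Subgraph, M.IsMatching ∧ M.verts ⊆ S ∧ M.edgeSet.ncard = G.matchingNumberOn S := by
  refine Nat.sSup_mem ?_ (bddAbove_matchingNumberOn_set S)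
  exact ⟨0, ⊥, fun _ hv ↦ hv.elim, by simp, by simp⟩

lemma matchingNumberOn_insert_le (u : V) :
    G.matchingNumberOn (insert u S) ≤ G.matchingNumberOn S + 1 := by
  obtain ⟨M, hM, hMS, hcard⟩ := exists_isMatching_ncard_eq_matchingNumberOn G (insert u S)
  rw [← hcard]
  by_cases hu : u ∈ M.verts
  · obtain ⟨x, hux, -⟩ := hM hu
    have hS : (M.deleteVerts {u, x}).verts ⊆ S := by
      rintro z ⟨hz, hzux⟩
      exact (hMS hz).resolve_left fun h ↦ hzux (.inl h)
    have := le_matchingNumberOn (hM.deleteVerts_pair hux) hS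
    have := hM.ncard_edgeSet_deleteVerts_pair hux
    omega
  · exact (le_matchingNumberOn hM fun z hz ↦
      (hMS hz).resolve_left fun h ↦ hu (h ▸ hz)).trans (Nat.le_succ _)

lemma matchingNumberOn_add_one_le (hu : u ∉ S) (hv : v ∉ S) (huv : G.Adj u v) :
    G.matchingNumberOn S + 1 ≤ G.matchingNumberOn (insert u (insert v S)) := by
  obtain ⟨M, hM, hMS, hcard⟩ := exists_isMatching_ncard_eq_matchingNumberOn G S
  have huM : u ∉ M.verts := fun h ↦ hu (hMS h)
  rw [← hcard, ← Subgraph.ncard_edgeSet_sup_subgraphOfAdj huM huv]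
  refine le_matchingNumberOn (hM.sup_subgraphOfAdj huM (fun h ↦ hv (hMS h)) huv) ?_
  simp only [Subgraph.verts_sup, subgraphOfAdj_verts]
  exact Set.union_subset (hMS.trans (by grind)) (by grind)

lemma matchingNumberOn_insert_insert_le {K : Set V} (hK : G.IsClique K)
    (hu : G.neighborSet u ⊆ K) (hv : G.neighborSet v ⊆ K) (huv : u ≠ v) :
    G.matchingNumberOn (insert u (insert v S)) ≤ G.matchingNumberOn S + 1 := by
  obtain ⟨M, hM, hMS, hcard⟩ :=
    exists_isMatching_ncard_eq_matchingNumberOn G (insert u (insert v S))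
  rw [← hcard]
  by_cases hvM : v ∉ M.verts
  · refine (le_matchingNumberOn hM fun z hz ↦ ?_).trans (matchingNumberOn_insert_le u)
    grind
  by_cases huM : u ∉ M.verts
  · refine (le_matchingNumberOn hM fun z hz ↦ ?_).trans (matchingNumberOn_insert_le v)
    grind
  push Not at hvM huM
  obtain ⟨x, hux, -⟩ := hM huM
  obtain ⟨M', hM', hM'uv, hcard'⟩ : ∃ M' : G.Subgraph, M'.IsMatching ∧
      M'.verts ⊆ M.verts \ {u, v} ∧ M'.edgeSet.ncard + 1 = M.edgeSet.ncard := by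
    by_cases hxv : x = v
    · subst hxv
      exact ⟨_, hM.deleteVerts_pair hux, subset_rfl, hM.ncard_edgeSet_deleteVerts_pair hux⟩
    · obtain ⟨y, hvy, -⟩ := hM hvM
      have hxy : x ≠ y := fun h ↦ huv (hM.eq_of_adj_right hux (h ▸ hvy))
      exact hM.exists_rematch hux hvy hxv (hK (hu (M.adj_sub hux)) (hv (M.adj_sub hvy)) hxy)
  have hM'S : M'.verts ⊆ S := fun z hz ↦ by grind
  have := le_matchingNumberOn hM' hM'S
  omega

lemma matchingNumberOn_insert_insert {K : Set V} (hK : G.IsClique K)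
    (hNu : G.neighborSet u ⊆ K) (hNv : G.neighborSet v ⊆ K) (hu : u ∉ S) (hv : v ∉ S)
    (huv : G.Adj u v) :
    G.matchingNumberOn (insert u (insert v S)) = G.matchingNumberOn S + 1 :=
  (matchingNumberOn_insert_insert_le hK hNu hNv huv.ne).antisymm
    (matchingNumberOn_add_one_le hu hv huv)

end Finite

end SimpleGraph

section Clusters

open SimpleGraph

variable {V P : Type*} {G : SimpleGraph V} {cluster : V → P} {W : Set V}

lemma ncard_setOf_cluster_notMem_insert_insert [Finite V] [DecidableEq P] {u v : V}
    (hu : u ∉ W) (hv : v ∉ W) (huv : u ≠ v) (hcl : cluster v = cluster u) (p : P) :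
    {z | cluster z = p ∧ z ∉ W}.ncard =
      {z | cluster z = p ∧ z ∉ insert u (insert v W)}.ncard +
        2 * if p = cluster u then 1 else 0 := by
  have hdiff : {z | cluster z = p ∧ z ∉ insert u (insert v W)} =
      {z | cluster z = p ∧ z ∉ W} \ {u, v} := by
    ext z
    simp only [Set.mem_ofPred_eq, Set.mem_insert_iff, Set.mem_sdiff, Set.mem_singleton_iff]
    tauto
  rw [hdiff]
  split_ifs with hp
  · subst hp
    rw [mul_one, ← Set.ncard_pair huv, Set.ncard_sdiff_add_ncard_of_subset]
    rintro z (rfl | rfl) <;> simp [*]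
  · rw [mul_zero, add_zero, Disjoint.sdiff_eq_left]
    rw [Set.disjoint_insert_right, Set.disjoint_singleton_right]
    grind

lemma matchingNumber_eq_matchingNumberOn_add_sum [Finite V] [Fintype P]
    (hclique : ∀ u w : V, cluster u = cluster w → u ≠ w → G.Adj u w)
    (hW : ∀ v : V, v ∉ W → ∀ u : V, G.Adj v u → cluster u = cluster v)
    (heven : ∀ p : P, Even {v : V | cluster v = p ∧ v ∉ W}.ncard) :
    matchingNumber G =
      G.matchingNumberOn W + ∑ p : P, {v : V | cluster v = p ∧ v ∉ W}.ncard / 2 := by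
  classical
  induction hn : Wᶜ.ncard using Nat.strong_induction_on generalizing W with
  | _ n ih =>
  obtain hWc | ⟨u, hu⟩ := Wᶜ.eq_empty_or_nonempty
  · obtain rfl := Set.compl_empty_iff.mp hWc
    simp [matchingNumberOn_univ]
  have hu' : u ∈ {z | cluster z = cluster u ∧ z ∉ W} := ⟨rfl, hu⟩
  have hlarge : 1 < {z | cluster z = cluster u ∧ z ∉ W}.ncard := by
    have := (Set.ncard_pos).mpr ⟨u, hu'⟩
    have := heven (cluster u)
    grind
  obtain ⟨v, ⟨hcl, hv⟩, hvu⟩ := Set.exists_ne_of_one_lt_ncard hlarge u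
  have hcard := ncard_setOf_cluster_notMem_insert_insert hu hv hvu.symm hcl
  have hW' : ∀ z, z ∉ insert u (insert v W) → ∀ w, G.Adj z w → cluster w = cluster z :=
    fun z hz ↦ hW z fun h ↦ hz (.inr (.inr h))
  have heven' (p : P) : Even {z | cluster z = p ∧ z ∉ insert u (insert v W)}.ncard := by
    have := heven p
    rw [hcard p] at this
    exact (Nat.even_add.mp this).mpr (even_two_mul _)
  have hlt : (insert u (insert v W))ᶜ.ncard < n := hn ▸ Set.ncard_lt_ncard
    ⟨Set.compl_subset_compl.mpr (by grind), fun h ↦ h hu (Set.mem_insert u _)⟩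
  have hclique_u : G.IsClique {z | cluster z = cluster u} :=
    fun a ha b hb hab ↦ hclique a b (ha.trans hb.symm) hab
  rw [ih _ hlt hW' heven' rfl, matchingNumberOn_insert_insert hclique_u (hW u hu)
    (fun w hw ↦ (hW v hv w hw).trans hcl) hu hv (hclique u v hcl.symm hvu.symm)]
  simp only [hcard, Nat.add_mul_div_left _ _ two_pos, Finset.sum_add_distrib,
    Finset.sum_ite_eq', Finset.mem_univ, if_true]
  ring

end Clusters

/-- If the vertex set of `G` is partitioned into cliques `U_p`, and
`W ⊆ V(G)` is such that vertices of `U_p \ W` have all their neighbors inside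
`U_p`, and each `|U_p \ W|` is even, then
`ν(G) = ν(G[W]) + Σ_p |U_p \ W| / 2`. -/
theorem stmt_7 {V P : Type*} [Fintype V] [Fintype P] (G : SimpleGraph V)
    (cluster : V → P)
    (hclique : ∀ u w : V, cluster u = cluster w → u ≠ w → G.Adj u w)
    (W : Set V)
    (hW : ∀ v : V, v ∉ W → ∀ u : V, G.Adj v u → cluster u = cluster v)
    (heven : ∀ p : P, Even {v : V | cluster v = p ∧ v ∉ W}.ncard) :
    matchingNumber G =
      matchingNumber (G.induce W) +
        ∑ p : P, {v : V | cluster v = p ∧ v ∉ W}.ncard / 2 := by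
  rw [SimpleGraph.matchingNumber_induce]
  exact matchingNumber_eq_matchingNumberOn_add_sum hclique hW heven
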